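/- arXiv:2011.08602 — 2 statements merged into one kernel-verified Lean document; each statement's English description precedes it below -/
import Mathlib

section
/- Let H be a real Hilbert space, T_l : H → H a bounded linear operator with ‖T_l‖ ≤ 1, z ∈ H, and define the affine operator T x := T_l x + z. Assume T has a fixed point φ̄ ∈ H. Let (d_k) be a sequence with d_k ∈ [0,1] such that Σ_{k=1}^{∞} d_k (1 − d_k) diverges. Then for every φ₁ ∈ H, the segmenting Mann iteration φ_{k+1} := (1 − d_k) φ_k + d_k T(φ_k) satisfies that (I − T) φ_k = φ_k − T(φ_k) converges strongly to zero. -/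
/-!
Subtracting the fixed point turns the iteration into `ψ (k+1) = (1 - t) ψ k + t Tl (ψ k)`
with `Tl` linear, and the residual `ψ k - Tl (ψ k)` obeys the same recursion, so its norm is
nonincreasing. In a Hilbert space each step lowers `‖ψ k‖²` by at least
`t (1 - t) ‖ψ k - Tl (ψ k)‖²`, so these weighted squared residuals have bounded partial sums;
since the weights alone have divergent sums, the monotone limit of the residual norms is `0`.
-/

open Filter Finset Topology

lemma tendsto_zero_of_antitone_of_weighted_sum_le {a w : ℕ → ℝ} {C : ℝ}
    (ha : Antitone a) (ha0 : ∀ k, 0 ≤ a k) (hw : ∀ k, 0 ≤ w k)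
    (hdiv : Tendsto (fun n => ∑ k ∈ range n, w k) atTop atTop)
    (hbound : ∀ n, ∑ k ∈ range n, w k * a k ≤ C) : Tendsto a atTop (𝓝 0) := by
  have hbdd : BddBelow (Set.range a) := ⟨0, by rintro _ ⟨k, rfl⟩; exact ha0 k⟩
  suffices hinf : ⨅ k, a k = 0 from hinf ▸ tendsto_atTop_ciInf ha hbdd
  by_contra hne
  have hpos : 0 < ⨅ k, a k := (le_ciInf ha0).lt_of_ne' hne
  obtain ⟨n, hn⟩ := ((hdiv.const_mul_atTop hpos).eventually_gt_atTop C).exists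
  have hle : (⨅ k, a k) * ∑ k ∈ range n, w k ≤ ∑ k ∈ range n, w k * a k := by
    rw [mul_sum]
    exact sum_le_sum fun k _ => by
      rw [mul_comm]; exact mul_le_mul_of_nonneg_left (ciInf_le hbdd k) (hw k)
  linarith [hbound n]

section NormedSpace

variable {E : Type*} [NormedAddCommGroup E] [NormedSpace ℝ E] (L : E →L[ℝ] E)

lemma sub_apply_relax (t : ℝ) (x : E) :
    (1 - t) • x + t • L x - L ((1 - t) • x + t • L x)
      = (1 - t) • (x - L x) + t • L (x - L x) := by
  simp only [map_add, map_sub, map_smul]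
  module

variable {L}

lemma ContinuousLinearMap.norm_apply_le_of_opNorm_le_one (hL : ‖L‖ ≤ 1) (x : E) :
    ‖L x‖ ≤ ‖x‖ :=
  (L.le_of_opNorm_le hL x).trans_eq (one_mul _)

lemma norm_relax_le (hL : ‖L‖ ≤ 1) {t : ℝ} (ht : t ∈ Set.Icc (0 : ℝ) 1) (x : E) :
    ‖(1 - t) • x + t • L x‖ ≤ ‖x‖ :=
  calc ‖(1 - t) • x + t • L x‖ ≤ (1 - t) * ‖x‖ + t * ‖L x‖ := by
        refine (norm_add_le _ _).trans_eq ?_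
        rw [norm_smul, norm_smul, Real.norm_of_nonneg (sub_nonneg.2 ht.2),
          Real.norm_of_nonneg ht.1]
    _ ≤ (1 - t) * ‖x‖ + t * ‖x‖ := by
        gcongr
        · exact ht.1
        · exact L.norm_apply_le_of_opNorm_le_one hL x
    _ = ‖x‖ := by ring

end NormedSpace

section InnerProductSpace

variable {E : Type*} [NormedAddCommGroup E] [InnerProductSpace ℝ E] {L : E →L[ℝ] E}

lemma norm_one_sub_smul_add_smul_sq (x y : E) (t : ℝ) :
    ‖(1 - t) • x + t • y‖ ^ 2
      = (1 - t) * ‖x‖ ^ 2 + t * ‖y‖ ^ 2 - t * (1 - t) * ‖x - y‖ ^ 2 := by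
  rw [norm_add_sq_real, norm_sub_sq_real, norm_smul, norm_smul, real_inner_smul_left,
    real_inner_smul_right, Real.norm_eq_abs, Real.norm_eq_abs, mul_pow, mul_pow, sq_abs, sq_abs]
  ring

lemma norm_sq_relax_le (hL : ‖L‖ ≤ 1) {t : ℝ} (ht : 0 ≤ t) (x : E) :
    ‖(1 - t) • x + t • L x‖ ^ 2 ≤ ‖x‖ ^ 2 - t * (1 - t) * ‖x - L x‖ ^ 2 := by
  have hLx : ‖L x‖ ^ 2 ≤ ‖x‖ ^ 2 := by
    gcongr; exact L.norm_apply_le_of_opNorm_le_one hL x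
  rw [norm_one_sub_smul_add_smul_sq]
  linarith [mul_le_mul_of_nonneg_left hLx ht]

lemma tendsto_sub_apply_of_relaxation {t : ℕ → ℝ} {ψ : ℕ → E} (hL : ‖L‖ ≤ 1)
    (ht : ∀ k, t k ∈ Set.Icc (0 : ℝ) 1)
    (hdiv : Tendsto (fun n => ∑ k ∈ range n, t k * (1 - t k)) atTop atTop)
    (hψ : ∀ k, ψ (k + 1) = (1 - t k) • ψ k + t k • L (ψ k)) :
    Tendsto (fun k => ψ k - L (ψ k)) atTop (𝓝 0) := by
  set r := fun k => ψ k - L (ψ k)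
  have hr_anti : Antitone fun k => ‖r k‖ := antitone_nat_of_succ_le fun k => by
    simp only [r, hψ, sub_apply_relax]
    exact norm_relax_le hL (ht k) _
  have hdecay : ∀ n, ∑ k ∈ range n, t k * (1 - t k) * ‖r k‖ ^ 2 ≤ ‖ψ 0‖ ^ 2 := fun n =>
    calc ∑ k ∈ range n, t k * (1 - t k) * ‖r k‖ ^ 2
        ≤ ∑ k ∈ range n, (‖ψ k‖ ^ 2 - ‖ψ (k + 1)‖ ^ 2) := sum_le_sum fun k _ => by
          have := norm_sq_relax_le hL (ht k).1 (ψ k)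
          rw [hψ]; linarith
      _ = ‖ψ 0‖ ^ 2 - ‖ψ n‖ ^ 2 := sum_range_sub' _ _
      _ ≤ ‖ψ 0‖ ^ 2 := sub_le_self _ (sq_nonneg _)
  have hsq : Tendsto (fun k => ‖r k‖ ^ 2) atTop (𝓝 0) :=
    tendsto_zero_of_antitone_of_weighted_sum_le
      (fun i j hij => pow_le_pow_left₀ (norm_nonneg _) (hr_anti hij) 2)
      (fun k => sq_nonneg _) (fun k => mul_nonneg (ht k).1 (sub_nonneg.2 (ht k).2)) hdiv hdecay
  rw [tendsto_zero_iff_norm_tendsto_zero]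
  simpa only [Real.sqrt_sq (norm_nonneg _), Real.sqrt_zero] using hsq.sqrt

end InnerProductSpace

theorem mann_mazya_residual_tendsto_zero_general
    {H : Type*} [NormedAddCommGroup H] [InnerProductSpace ℝ H]
    (Tl : H →L[ℝ] H) (hTl : ‖Tl‖ ≤ 1) (z : H)
    (φbar : H) (hfix : φbar = Tl φbar + z)
    (d : ℕ → ℝ) (hd : ∀ k, d k ∈ Set.Icc (0 : ℝ) 1)
    (hdiv : Tendsto (fun n => ∑ k ∈ Icc 1 n, d k * (1 - d k)) atTop atTop)
    (φ : ℕ → H)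
    (hrec : ∀ k, 1 ≤ k → φ (k + 1) = (1 - d k) • φ k + d k • (Tl (φ k) + z)) :
    Tendsto (fun k => φ k - (Tl (φ k) + z)) atTop (nhds 0) := by
  have hz : z = φbar - Tl φbar := eq_sub_of_add_eq' hfix.symm
  -- `hrec` starts at `k = 1`, hence the index shift.
  set ψ : ℕ → H := fun k => φ (k + 1) - φbar
  have hψ : ∀ k, ψ (k + 1) = (1 - d (k + 1)) • ψ k + d (k + 1) • Tl (ψ k) := fun k => by
    simp only [ψ, hrec (k + 1) (Nat.le_add_left 1 k), hz, map_sub]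
    module
  have hdiv' : Tendsto (fun n => ∑ k ∈ range n, d (k + 1) * (1 - d (k + 1))) atTop atTop := by
    refine hdiv.congr fun n => ?_
    rw [← Ico_add_one_right_eq_Icc, sum_Ico_eq_sum_range]
    simp only [Nat.add_sub_cancel, add_comm 1]
  refine (tendsto_add_atTop_iff_nat 1).mp ?_
  convert tendsto_sub_apply_of_relaxation hTl (fun k => hd (k + 1)) hdiv' hψ using 2 with k
  simp only [ψ, hz, map_sub]
  abel

/-- **Theorem 4.2 (residual convergence of the Mann–Maz'ya iteration).** Let `H` be a
real Hilbert space, `T_l` a bounded linear operator with `‖T_l‖ ≤ 1`, `T x = T_l x + z`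
an affine operator having a fixed point `φ̄`, and `(d k)` a sequence in `[0,1]` with
`∑ d k (1 - d k) = ∞`. Then for every `φ₁ ∈ H` the segmenting Mann iteration satisfies
`(I - T) φ k → 0` strongly. -/
theorem mann_mazya_residual_tendsto_zero
    {H : Type*} [NormedAddCommGroup H] [InnerProductSpace ℝ H] [CompleteSpace H]
    (Tl : H →L[ℝ] H) (hTl : ‖Tl‖ ≤ 1) (z : H)
    (φbar : H) (hfix : φbar = Tl φbar + z)
    (d : ℕ → ℝ) (hd : ∀ k, d k ∈ Set.Icc (0 : ℝ) 1)
    (hdiv : Tendsto (fun n => ∑ k ∈ Icc 1 n, d k * (1 - d k)) atTop atTop)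
    (φ : ℕ → H)
    (hrec : ∀ k, 1 ≤ k → φ (k + 1) = (1 - d k) • φ k + d k • (Tl (φ k) + z)) :
    Tendsto (fun k => φ k - (Tl (φ k) + z)) atTop (nhds 0) :=
  mann_mazya_residual_tendsto_zero_general Tl hTl z φbar hfix d hd hdiv φ hrec
end

section
/- Let H be a real Hilbert space and T_l : H → H a bounded linear operator with ‖T_l‖ ≤ 1 which is self-adjoint and positive (⟨T_l x, x⟩ ≥ 0 for all x ∈ H). Let z ∈ H, φ̄ a solution of φ̄ = T_l φ̄ + z, φ₁ ∈ H, and μ > 1. For ε > 0 and z_ε ∈ H with ‖z_ε − z‖ ≤ ε, define φ₁^ε := φ₁, φ_{k+1}^ε := T_l φ_k^ε + z_ε, and the discrepancy-principle stopping index k(ε, z_ε) := min{k ∈ ℕ : ‖z_ε − (I − T_l) φ_k^ε‖ ≤ μ ε}. Then k(ε, z_ε) is finite and there is a constant c > 0, depending only on μ and ‖φ̄ − φ₁‖, such that k(ε, z_ε) ≤ c ε^{-2} for all ε > 0 and all admissible z_ε; in fact k(ε, z_ε) ≤ (μ − 1)^{-2} ‖φ̄ − φ₁‖² ε^{-2}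 + 2. -/
/-!
The residual `r k = z_ε - (I - T) φ_k` of the iteration satisfies `r (k + 1) = T (r k)`, and
`r 1 = (z_ε - z) + (I - T) u` with `u = φ̄ - φ₁`, so `r (m + 1) = T^m (z_ε - z) + T^m (I - T) u`.
The first term has norm at most `ε`. For a positive contraction `‖T x‖² ≤ ⟪T x, x⟫`, hence
`‖(I - T) x‖² ≤ ‖x‖² - ‖T x‖²`; telescoping along the orbit of `u` bounds
`∑_{j ≤ m} ‖T^j (I - T) u‖²` by `‖u‖²`, and since these terms decrease,
`(m + 1) ‖T^m (I - T) u‖² ≤ ‖u‖²`. So `‖r (m + 1)‖ ≤ μ ε` as soon as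
`m + 1 > ‖u‖² / ((μ - 1) ε)²`.
-/

open Finset

namespace ContinuousLinearMap

section Iteration

variable {R M : Type*} [Semiring R] [TopologicalSpace M] [AddCommGroup M] [Module R M]

theorem pow_succ_apply (T : M →L[R] M) (n : ℕ) (x : M) : (T ^ (n + 1)) x = T ((T ^ n) x) := by
  rw [pow_succ', mul_apply_eq_comp]

theorem residual_eq_pow_apply {T : M →L[R] M} {y : M} {φ : ℕ → M}
    (hrec : ∀ k, 1 ≤ k → φ (k + 1) = T (φ k) + y) (m : ℕ) :
    y - (φ (m + 1) - T (φ (m + 1))) = (T ^ m) (y - (φ 1 - T (φ 1))) := by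
  induction m with
  | zero => simp
  | succ m ih =>
    rw [pow_succ_apply, ← ih, hrec (m + 1) le_add_self, map_add, map_sub, map_sub]
    abel

end Iteration

section Contraction

variable {E : Type*} [NormedAddCommGroup E] [NormedSpace ℝ E] {T : E →L[ℝ] E}

theorem norm_apply_le_of_opNorm_le_one_s11 (hT : ‖T‖ ≤ 1) (x : E) : ‖T x‖ ≤ ‖x‖ := by
  simpa using T.le_of_opNorm_le hT x

theorem norm_pow_apply_le_of_opNorm_le_one (hT : ‖T‖ ≤ 1) (n : ℕ) (x : E) :
    ‖(T ^ n) x‖ ≤ ‖x‖ := by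
  induction n with
  | zero => simp
  | succ n ih => exact (pow_succ_apply T n x ▸ norm_apply_le_of_opNorm_le_one_s11 hT _).trans ih

theorem antitone_norm_pow_apply_of_opNorm_le_one (hT : ‖T‖ ≤ 1) (x : E) :
    Antitone fun n ↦ ‖(T ^ n) x‖ :=
  antitone_nat_of_succ_le fun n ↦ pow_succ_apply T n x ▸ norm_apply_le_of_opNorm_le_one_s11 hT _

end Contraction

namespace IsPositive

variable {H : Type*} [NormedAddCommGroup H] [InnerProductSpace ℝ H] {T : H →L[ℝ] H}

theorem sq_norm_apply_le_inner_apply_self (hT : T.IsPositive) (hT1 : ‖T‖ ≤ 1) (x : H) :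
    ‖T x‖ ^ 2 ≤ inner ℝ (T x) x := by
  have hpos := hT.inner_nonneg_left (x - T x)
  rw [map_sub, inner_sub_left, inner_sub_right, inner_sub_right, hT.inner_left_eq_inner_right (T x) x,
    real_inner_self_eq_norm_sq] at hpos
  have hTTx : inner ℝ (T (T x)) (T x) ≤ ‖T x‖ ^ 2 := by
    calc inner ℝ (T (T x)) (T x) ≤ ‖T (T x)‖ * ‖T x‖ := real_inner_le_norm _ _
      _ ≤ ‖T x‖ * ‖T x‖ := by gcongr; exact norm_apply_le_of_opNorm_le_one_s11 hT1 _
      _ = ‖T x‖ ^ 2 := (sq _).symm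
  linarith

theorem sq_norm_sub_apply_le (hT : T.IsPositive) (hT1 : ‖T‖ ≤ 1) (x : H) :
    ‖x - T x‖ ^ 2 ≤ ‖x‖ ^ 2 - ‖T x‖ ^ 2 := by
  have := hT.sq_norm_apply_le_inner_apply_self hT1 x
  rw [norm_sub_sq_real, real_inner_comm]
  linarith

theorem sum_sq_norm_pow_apply_sub_le (hT : T.IsPositive) (hT1 : ‖T‖ ≤ 1) (x : H) (n : ℕ) :
    ∑ j ∈ range n, ‖(T ^ j) (x - T x)‖ ^ 2 ≤ ‖x‖ ^ 2 := by
  have hstep : ∀ j, ‖(T ^ j) (x - T x)‖ ^ 2 ≤ ‖(T ^ j) x‖ ^ 2 - ‖(T ^ (j + 1)) x‖ ^ 2 := by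
    intro j
    rw [map_sub, ← mul_apply_eq_comp, ← pow_succ, pow_succ_apply]
    exact hT.sq_norm_sub_apply_le hT1 _
  calc ∑ j ∈ range n, ‖(T ^ j) (x - T x)‖ ^ 2
      ≤ ∑ j ∈ range n, (‖(T ^ j) x‖ ^ 2 - ‖(T ^ (j + 1)) x‖ ^ 2) := sum_le_sum fun j _ ↦ hstep j
    _ = ‖x‖ ^ 2 - ‖(T ^ n) x‖ ^ 2 := by rw [sum_range_sub' (fun j ↦ ‖(T ^ j) x‖ ^ 2)]; simp
    _ ≤ ‖x‖ ^ 2 := sub_le_self _ (sq_nonneg _)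

theorem succ_mul_sq_norm_pow_apply_sub_le (hT : T.IsPositive) (hT1 : ‖T‖ ≤ 1) (x : H) (n : ℕ) :
    (n + 1) * ‖(T ^ n) (x - T x)‖ ^ 2 ≤ ‖x‖ ^ 2 := by
  have hanti := antitone_norm_pow_apply_of_opNorm_le_one hT1 (x - T x)
  calc (n + 1) * ‖(T ^ n) (x - T x)‖ ^ 2
      = #(range (n + 1)) • ‖(T ^ n) (x - T x)‖ ^ 2 := by simp
    _ ≤ ∑ j ∈ range (n + 1), ‖(T ^ j) (x - T x)‖ ^ 2 :=
        card_nsmul_le_sum _ _ _ fun j hj ↦ by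
          gcongr; exact hanti (Nat.lt_succ_iff.mp (mem_range.mp hj))
    _ ≤ ‖x‖ ^ 2 := hT.sum_sq_norm_pow_apply_sub_le hT1 x _

theorem norm_pow_floor_apply_sub_lt (hT : T.IsPositive) (hT1 : ‖T‖ ≤ 1) (x : H) {c : ℝ}
    (hc : 0 < c) : ‖(T ^ ⌊‖x‖ ^ 2 / c ^ 2⌋₊) (x - T x)‖ < c := by
  set n := ⌊‖x‖ ^ 2 / c ^ 2⌋₊
  have hn : ‖x‖ ^ 2 < (n + 1) * c ^ 2 := by
    rw [← div_lt_iff₀ (by positivity)]; exact Nat.lt_floor_add_one _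
  have := hT.succ_mul_sq_norm_pow_apply_sub_le hT1 x n
  refine (pow_lt_pow_iff_left₀ (norm_nonneg _) hc.le two_ne_zero).mp ?_
  nlinarith

end IsPositive

end ContinuousLinearMap

theorem mazya_discrepancy_stopping_index_bound_general
    {H : Type*} [NormedAddCommGroup H] [InnerProductSpace ℝ H]
    (Tl : H →L[ℝ] H) (hTl : ‖Tl‖ ≤ 1)
    (hsa : ∀ x y : H, inner ℝ (Tl x) y = (inner ℝ x (Tl y) : ℝ))
    (hpos : ∀ x : H, 0 ≤ (inner ℝ (Tl x) x : ℝ))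
    (z : H) (φbar : H) (hfix : φbar = Tl φbar + z)
    (φ₁ : H) (μ : ℝ) (hμ : 1 < μ)
    (ε : ℝ) (hε : 0 < ε) (zε : H) (hzε : ‖zε - z‖ ≤ ε)
    (φε : ℕ → H) (hφε1 : φε 1 = φ₁)
    (hrec : ∀ k, 1 ≤ k → φε (k + 1) = Tl (φε k) + zε) :
    {k : ℕ | 1 ≤ k ∧ ‖zε - (φε k - Tl (φε k))‖ ≤ μ * ε}.Nonempty ∧
      ((sInf {k : ℕ | 1 ≤ k ∧ ‖zε - (φε k - Tl (φε k))‖ ≤ μ * ε} : ℕ) : ℝ) ≤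
        ((μ - 1) ^ 2)⁻¹ * ‖φbar - φ₁‖ ^ 2 * (ε ^ 2)⁻¹ + 2 := by
  have hT : Tl.IsPositive := (ContinuousLinearMap.isPositive_iff Tl).mpr ⟨hsa, hpos⟩
  set u := φbar - φ₁
  set c := (μ - 1) * ε
  have hc : 0 < c := mul_pos (sub_pos.mpr hμ) hε
  set m := ⌊‖u‖ ^ 2 / c ^ 2⌋₊
  have hres₁ : zε - (φε 1 - Tl (φε 1)) = (zε - z) + (u - Tl u) := by
    rw [hφε1, eq_sub_of_add_eq' hfix.symm]; simp only [u, map_sub]; abel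
  have hmem : m + 1 ∈ {k : ℕ | 1 ≤ k ∧ ‖zε - (φε k - Tl (φε k))‖ ≤ μ * ε} := by
    refine ⟨le_add_self, ?_⟩
    rw [ContinuousLinearMap.residual_eq_pow_apply hrec, hres₁, map_add]
    calc ‖(Tl ^ m) (zε - z) + (Tl ^ m) (u - Tl u)‖
        ≤ ‖(Tl ^ m) (zε - z)‖ + ‖(Tl ^ m) (u - Tl u)‖ := norm_add_le _ _
      _ ≤ ε + c :=
          add_le_add ((ContinuousLinearMap.norm_pow_apply_le_of_opNorm_le_one hTl _ _).trans hzε)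
            (hT.norm_pow_floor_apply_sub_lt hTl u hc).le
      _ = μ * ε := by ring
  refine ⟨⟨_, hmem⟩, ?_⟩
  have hm : (m : ℝ) ≤ ‖u‖ ^ 2 / c ^ 2 := Nat.floor_le (by positivity)
  have hratio : ‖u‖ ^ 2 / c ^ 2 = ((μ - 1) ^ 2)⁻¹ * ‖u‖ ^ 2 * (ε ^ 2)⁻¹ := by
    rw [mul_pow]; field_simp
  calc ((sInf {k : ℕ | 1 ≤ k ∧ ‖zε - (φε k - Tl (φε k))‖ ≤ μ * ε} : ℕ) : ℝ)
      ≤ m + 1 := by exact_mod_cast Nat.sInf_le hmem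
    _ ≤ ((μ - 1) ^ 2)⁻¹ * ‖u‖ ^ 2 * (ε ^ 2)⁻¹ + 2 := by linarith

/-- **Theorem 4.8 (discrepancy principle stopping index).** Let `H` be a real Hilbert
space, `T_l` a self-adjoint positive bounded linear operator with `‖T_l‖ ≤ 1`, `φ̄` a
solution of `φ̄ = T_l φ̄ + z`, and `μ > 1`. For noisy data `z_ε` with `‖z_ε - z‖ ≤ ε`
and the iteration `φ^ε_{k+1} = T_l φ^ε_k + z_ε` starting from `φ₁`, the discrepancy
principle stopping index `k(ε, z_ε) = min {k ≥ 1 : ‖z_ε - (I - T_l) φ^ε_k‖ ≤ μ ε}` is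
finite and satisfies `k(ε, z_ε) ≤ (μ - 1)⁻² ‖φ̄ - φ₁‖² ε⁻² + 2 = O(ε⁻²)`. -/
theorem mazya_discrepancy_stopping_index_bound
    {H : Type*} [NormedAddCommGroup H] [InnerProductSpace ℝ H] [CompleteSpace H]
    (Tl : H →L[ℝ] H) (hTl : ‖Tl‖ ≤ 1)
    (hsa : ∀ x y : H, inner ℝ (Tl x) y = (inner ℝ x (Tl y) : ℝ))
    (hpos : ∀ x : H, 0 ≤ (inner ℝ (Tl x) x : ℝ))
    (z : H) (φbar : H) (hfix : φbar = Tl φbar + z)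
    (φ₁ : H) (μ : ℝ) (hμ : 1 < μ)
    (ε : ℝ) (hε : 0 < ε) (zε : H) (hzε : ‖zε - z‖ ≤ ε)
    (φε : ℕ → H) (hφε1 : φε 1 = φ₁)
    (hrec : ∀ k, 1 ≤ k → φε (k + 1) = Tl (φε k) + zε) :
    {k : ℕ | 1 ≤ k ∧ ‖zε - (φε k - Tl (φε k))‖ ≤ μ * ε}.Nonempty ∧
      ((sInf {k : ℕ | 1 ≤ k ∧ ‖zε - (φε k - Tl (φε k))‖ ≤ μ * ε} : ℕ) : ℝ) ≤
        ((μ - 1) ^ 2)⁻¹ * ‖φbar - φ₁‖ ^ 2 * (ε ^ 2)⁻¹ + 2 :=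
  mazya_discrepancy_stopping_index_bound_general Tl hTl hsa hpos z φbar hfix φ₁ μ hμ ε hε zε hzε φε
    hφε1 hrec
end
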